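/- Any linear partial differential operator of the second order on space-time ℝ×ℝⁿ (with continuous coefficients and not all second-order coefficients vanishing) that is both Poincaré invariant and dilation invariant is of the form L = α□ for some α ∈ ℂ\{0}. -/

import Mathlib

open scoped BigOperators

noncomputable section

/-- Partial derivative in the `i`-th coordinate direction. -/
def pd {d : ℕ} (i : Fin d) (u : (Fin d → ℝ) → ℂ) : (Fin d → ℝ) → ℂ :=
  fun x => fderiv ℝ u x (Pi.single i 1)

/-- Iterated mixed partial derivative `∂^β` for a multi-index `β`. -/
def pdMulti {d : ℕ} (β : Fin d → ℕ) (u : (Fin d → ℝ) → ℂ) : (Fin d → ℝ) → ℂ :=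
  (List.finRange d).foldr (fun i v => (pd i)^[β i] v) u

/-- The finite set of multi-indices (on `d` variables) of total degree at most `m`. -/
def mIdx (d m : ℕ) : Finset (Fin d → ℕ) :=
  (Fintype.piFinset fun _ : Fin d => Finset.range (m + 1)).filter fun β => (∑ i, β i) ≤ m

/-- The linear partial differential operator `L = ∑_{|β| ≤ m} a_β ∂^β`. -/
def opApply {d : ℕ} (m : ℕ) (a : (Fin d → ℕ) → (Fin d → ℝ) → ℂ)
    (u : (Fin d → ℝ) → ℂ) : (Fin d → ℝ) → ℂ :=
  fun x => ∑ β ∈ mIdx d m, a β x * pdMulti β u x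

/-- Smooth (`C^∞`) functions. -/
def SmoothFn {d : ℕ} (u : (Fin d → ℝ) → ℂ) : Prop := ContDiff ℝ (⊤ : ℕ∞) u

/-- The Minkowski metric matrix `g = diag(1, -1, …, -1)` on `ℝ × ℝⁿ`. -/
def minkMatrix (n : ℕ) : Matrix (Fin (n + 1)) (Fin (n + 1)) ℝ :=
  Matrix.diagonal fun i => if i = 0 then 1 else -1

/-- Membership in the Lorentz group `O(1,n)`:  `ᵗΛ g Λ = g`. -/
def IsLorentz {n : ℕ} (Λ : Matrix (Fin (n + 1)) (Fin (n + 1)) ℝ) : Prop :=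
  Λ.transpose * minkMatrix n * Λ = minkMatrix n

/-- The d'Alembertian `□ = ∂_t² - ∂₁² - ⋯ - ∂ₙ²` on space-time `ℝ × ℝⁿ`
(coordinate `0` is time). -/
def dAlem {n : ℕ} (u : (Fin (n + 1) → ℝ) → ℂ) : (Fin (n + 1) → ℝ) → ℂ :=
  fun x => pd 0 (pd 0 u) x - ∑ j : Fin n, pd j.succ (pd j.succ u) x

/-- `L` is translation invariant: `T_y^* L u = L T_y^* u`. -/
def TransInv {n : ℕ} (m : ℕ) (a : (Fin (n + 1) → ℕ) → (Fin (n + 1) → ℝ) → ℂ) : Prop :=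
  ∀ y : Fin (n + 1) → ℝ, ∀ u : (Fin (n + 1) → ℝ) → ℂ, SmoothFn u →
    ∀ x, opApply m a u (x - y) = opApply m a (fun z => u (z - y)) x

/-- `L` is Lorentz invariant: `Λ^* L u = L Λ^* u` for all `Λ ∈ O(1,n)`. -/
def LorentzInv {n : ℕ} (m : ℕ) (a : (Fin (n + 1) → ℕ) → (Fin (n + 1) → ℝ) → ℂ) : Prop :=
  ∀ Λ : Matrix (Fin (n + 1)) (Fin (n + 1)) ℝ, IsLorentz Λ →
    ∀ u : (Fin (n + 1) → ℝ) → ℂ, SmoothFn u →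
      ∀ x, opApply m a u (Λ.mulVec x) = opApply m a (fun z => u (Λ.mulVec z)) x

/-- `L` is dilation invariant: for every nonzero smooth `u`, the statements `Lu = 0`,
`L D_λ^* u = 0` for all `λ > 0`, and `L D_λ^* u = 0` for some `λ > 0` with `λ ≠ 1`,
are equivalent. -/
def DilInv {n : ℕ} (m : ℕ) (a : (Fin (n + 1) → ℕ) → (Fin (n + 1) → ℝ) → ℂ) : Prop :=
  ∀ u : (Fin (n + 1) → ℝ) → ℂ, SmoothFn u → u ≠ 0 →
    ((opApply m a u = 0 ↔ ∀ r : ℝ, 0 < r → opApply m a (fun x => u (r • x)) = 0) ∧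
     (opApply m a u = 0 ↔ ∃ r : ℝ, 0 < r ∧ r ≠ 1 ∧ opApply m a (fun x => u (r • x)) = 0))

/-!
Applied to an exponential `x ↦ exp (ζ ⬝ᵥ x)` with `ζ ∈ ℂⁿ⁺¹`, the operator multiplies it by its
symbol `∑ a_β(x) ζ^β`. Translation invariance makes the symbol independent of `x`, hence the
coefficients constant, and Lorentz invariance makes it invariant under `ζ ↦ ζ Λ`. Reflections of
single coordinates kill every monomial with an odd exponent, leaving `c + ∑ cᵢ ζᵢ²`, and a
Minkowski reflection mixing `t` with `xₛ` forces `cₛ = -c₀`. Dilation invariance says that the zero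
set of the symbol is a cone: the zero `ζ = (w, 0, …, 0)` with `c + c₀ w² = 0` and its double `2ζ`
give `c = 0`.
-/

open Matrix

section MultiIndex

variable {d : ℕ}

lemma mem_mIdx {m : ℕ} {β : Fin d → ℕ} : β ∈ mIdx d m ↔ ∑ i, β i ≤ m := by
  refine ⟨fun h => (Finset.mem_filter.mp h).2, fun h => Finset.mem_filter.mpr ⟨?_, h⟩⟩
  refine Fintype.mem_piFinset.mpr fun i => Finset.mem_range.mpr (Nat.lt_succ_of_le ?_)
  exact (Finset.single_le_sum (fun k _ => Nat.zero_le (β k)) (Finset.mem_univ i)).trans h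

lemma eq_zero_or_eq_single_two_of_even {β : Fin d → ℕ} (h2 : ∑ i, β i ≤ 2)
    (hev : ∀ i, Even (β i)) : β = 0 ∨ ∃ i, β = Pi.single i 2 := by
  by_cases h0 : β = 0
  · exact Or.inl h0
  obtain ⟨i, hi⟩ := Function.ne_iff.mp h0
  have hsum : β i + ∑ k ∈ Finset.univ.erase i, β k = ∑ k, β k :=
    Finset.add_sum_erase _ β (Finset.mem_univ i)
  have hβi : β i = 2 := by
    obtain ⟨r, hr⟩ := hev i
    simp only [Pi.zero_apply] at hi
    omega
  refine Or.inr ⟨i, funext fun k => ?_⟩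
  rcases eq_or_ne k i with rfl | hk
  · simpa using hβi
  · have hle : β k ≤ ∑ l ∈ Finset.univ.erase i, β l :=
      Finset.single_le_sum (fun l _ => Nat.zero_le (β l))
        (Finset.mem_erase.mpr ⟨hk, Finset.mem_univ k⟩)
    rw [Pi.single_eq_of_ne hk]
    omega

lemma sum_mIdx_two_of_odd {M : Type*} [AddCommMonoid M] (f : (Fin d → ℕ) → M)
    (hf : ∀ β ∈ mIdx d 2, ∀ i, Odd (β i) → f β = 0) :
    ∑ β ∈ mIdx d 2, f β = f 0 + ∑ i, f (Pi.single i 2) := by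
  classical
  have hinj : Function.Injective fun i : Fin d => (Pi.single i 2 : Fin d → ℕ) :=
    fun i j h => by_contra fun hne => two_ne_zero <| by
      simpa [Pi.single_eq_of_ne hne] using congrFun h i
  have hzero : (0 : Fin d → ℕ) ∉ Finset.univ.map ⟨_, hinj⟩ := by
    simp [funext_iff, Pi.single_apply]
  have hsub : insert 0 (Finset.univ.map ⟨_, hinj⟩) ⊆ mIdx d 2 := by
    intro β hβ
    rcases Finset.mem_insert.mp hβ with rfl | hβ
    · simp [mem_mIdx]
    · obtain ⟨i, -, rfl⟩ := Finset.mem_map.mp hβ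
      simp [mem_mIdx]
  rw [← Finset.sum_subset hsub, Finset.sum_insert hzero, Finset.sum_map]
  · rfl
  intro β hβ hβS
  by_cases hev : ∀ i, Even (β i)
  · rcases eq_zero_or_eq_single_two_of_even (mem_mIdx.mp hβ) hev with rfl | ⟨i, rfl⟩
    · exact absurd (Finset.mem_insert_self _ _) hβS
    · exact absurd (Finset.mem_insert_of_mem (Finset.mem_map_of_mem _ (Finset.mem_univ i))) hβS
  · push Not at hev
    obtain ⟨i, hi⟩ := hev
    exact hf β hβ i (Nat.not_even_iff_odd.mp hi)

lemma eq_zero_of_forall_sum_mul_prod_pow_eq_zero {K : Type*} [CommRing K] [IsDomain K]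
    [Infinite K] {s : Finset (Fin d → ℕ)} {c : (Fin d → ℕ) → K}
    (h : ∀ ζ : Fin d → K, ∑ β ∈ s, c β * ∏ i, ζ i ^ β i = 0) : ∀ β ∈ s, c β = 0 := by
  intro β₀ hβ₀
  let toFinsupp := (Finsupp.equivFunOnFinite (α := Fin d) (M := ℕ)).symm
  let p : MvPolynomial (Fin d) K := ∑ β ∈ s, MvPolynomial.monomial (toFinsupp β) (c β)
  have hp : p = 0 := MvPolynomial.funext fun ζ => by
    simp only [p, map_sum, MvPolynomial.eval_monomial, map_zero, Finsupp.prod_pow]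
    exact h ζ
  have hcoeff := congrArg (MvPolynomial.coeff (toFinsupp β₀)) hp
  rw [MvPolynomial.coeff_sum, Finset.sum_eq_single β₀ (fun β _ hne => ?_)
    (fun h => absurd hβ₀ h)] at hcoeff
  · simpa using hcoeff
  · rw [MvPolynomial.coeff_monomial, if_neg (toFinsupp.injective.ne hne)]

end MultiIndex

section Derivatives

variable {d : ℕ}

lemma foldr_iterate_pd_single (i : Fin d) (k : ℕ) (u : (Fin d → ℝ) → ℂ) (l : List (Fin d)) :
    l.foldr (fun j v => (pd j)^[(Pi.single i k : Fin d → ℕ) j] v) u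
      = (pd i)^[k * l.count i] u := by
  induction l with
  | nil => simp
  | cons j l ih =>
    rw [List.foldr_cons, ih, List.count_cons]
    rcases eq_or_ne j i with rfl | hji
    · rw [Pi.single_eq_same, ← Function.iterate_add_apply]
      simp [mul_add, add_comm]
    · simp [hji]

lemma pdMulti_single (i : Fin d) (k : ℕ) (u : (Fin d → ℝ) → ℂ) :
    pdMulti (Pi.single i k) u = (pd i)^[k] u := by
  rw [pdMulti, foldr_iterate_pd_single, List.count_finRange, mul_one]

lemma pdMulti_zero (u : (Fin d → ℝ) → ℂ) : pdMulti 0 u = u := by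
  simp only [pdMulti, Pi.zero_apply, Function.iterate_zero, id_eq]
  induction List.finRange d <;> simp_all

def linForm (ζ : Fin d → ℂ) : (Fin d → ℝ) →L[ℝ] ℂ :=
  ∑ i, ζ i • Complex.ofRealCLM.comp (ContinuousLinearMap.proj i)

lemma linForm_apply (ζ : Fin d → ℂ) (x : Fin d → ℝ) :
    linForm ζ x = ζ ⬝ᵥ fun i => (x i : ℂ) := by
  simp [linForm, dotProduct]

def expLin (ζ : Fin d → ℂ) (x : Fin d → ℝ) : ℂ := Complex.exp (linForm ζ x)

lemma smoothFn_expLin (ζ : Fin d → ℂ) : SmoothFn (expLin ζ) :=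
  (linForm ζ).contDiff.cexp

@[simp]
lemma expLin_zero (ζ : Fin d → ℂ) : expLin ζ 0 = 1 := by
  simp [expLin]

lemma expLin_add (ζ : Fin d → ℂ) (x y : Fin d → ℝ) :
    expLin ζ (x + y) = expLin ζ x * expLin ζ y := by
  simp [expLin, Complex.exp_add]

lemma expLin_mulVec (Λ : Matrix (Fin d) (Fin d) ℝ) (ζ : Fin d → ℂ) (x : Fin d → ℝ) :
    expLin ζ (Λ *ᵥ x) = expLin (ζ ᵥ* Λ.map (↑)) x := by
  have hcast : (fun i => ((Λ *ᵥ x) i : ℂ)) = Λ.map (↑) *ᵥ fun i => (x i : ℂ) :=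
    funext (Complex.ofRealHom.map_mulVec Λ x)
  simp only [expLin, linForm_apply, hcast, dotProduct_mulVec]

lemma expLin_smul (r : ℝ) (ζ : Fin d → ℂ) (x : Fin d → ℝ) :
    expLin ζ (r • x) = expLin ((r : ℂ) • ζ) x := by
  simp [expLin, linForm_apply, dotProduct, Finset.mul_sum, mul_assoc]

lemma pd_const_mul_expLin (i : Fin d) (ζ : Fin d → ℂ) (c : ℂ) :
    pd i (fun x => c * expLin ζ x) = fun x => (ζ i * c) * expLin ζ x := by
  funext x
  change fderiv ℝ (fun y => c * Complex.exp (linForm ζ y)) x (Pi.single i 1) = _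
  rw [(((linForm ζ).hasFDerivAt.cexp).const_mul c).fderiv]
  simp [linForm_apply, expLin, dotProduct, Pi.single_apply, apply_ite Complex.ofReal]
  ring

lemma foldr_iterate_pd_const_mul_expLin (β : Fin d → ℕ) (ζ : Fin d → ℂ) (l : List (Fin d))
    (c : ℂ) : l.foldr (fun i v => (pd i)^[β i] v) (fun x => c * expLin ζ x)
      = fun x => ((l.map fun i => ζ i ^ β i).prod * c) * expLin ζ x := by
  have hiter (i : Fin d) (k : ℕ) (c : ℂ) :
      (pd i)^[k] (fun x => c * expLin ζ x) = fun x => (ζ i ^ k * c) * expLin ζ x := by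
    induction k generalizing c with
    | zero => simp
    | succ k ih => rw [Function.iterate_succ_apply, pd_const_mul_expLin, ih, pow_succ, mul_assoc]
  induction l with
  | nil => simp
  | cons i l ih =>
    rw [List.foldr_cons, ih, hiter]
    simp only [List.map_cons, List.prod_cons, mul_assoc]

lemma pdMulti_const_mul_expLin (β : Fin d → ℕ) (ζ : Fin d → ℂ) (c : ℂ) :
    pdMulti β (fun x => c * expLin ζ x) = fun x => ((∏ i, ζ i ^ β i) * c) * expLin ζ x := by
  rw [pdMulti, foldr_iterate_pd_const_mul_expLin, Fin.prod_univ_def]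

end Derivatives

def symbol {d : ℕ} (m : ℕ) (a : (Fin d → ℕ) → (Fin d → ℝ) → ℂ) (ζ : Fin d → ℂ)
    (x : Fin d → ℝ) : ℂ :=
  ∑ β ∈ mIdx d m, a β x * ∏ i, ζ i ^ β i

lemma opApply_const_mul_expLin {d m : ℕ} (a : (Fin d → ℕ) → (Fin d → ℝ) → ℂ)
    (ζ : Fin d → ℂ) (c : ℂ) (x : Fin d → ℝ) :
    opApply m a (fun x => c * expLin ζ x) x = symbol m a ζ x * (c * expLin ζ x) := by
  simp only [opApply, symbol, pdMulti_const_mul_expLin, Finset.sum_mul, mul_assoc]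

lemma opApply_expLin {d m : ℕ} (a : (Fin d → ℕ) → (Fin d → ℝ) → ℂ) (ζ : Fin d → ℂ)
    (x : Fin d → ℝ) : opApply m a (expLin ζ) x = symbol m a ζ x * expLin ζ x := by
  simpa using opApply_const_mul_expLin (m := m) a ζ 1 x

section Invariance

variable {n m : ℕ} {a : (Fin (n + 1) → ℕ) → (Fin (n + 1) → ℝ) → ℂ}

lemma symbol_eq_symbol_zero (hT : TransInv m a) (ζ : Fin (n + 1) → ℂ) (x : Fin (n + 1) → ℝ) :
    symbol m a ζ x = symbol m a ζ 0 := by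
  have htrans : (fun z => expLin ζ (z - x)) = fun z => expLin ζ (-x) * expLin ζ z := by
    funext z
    rw [sub_eq_add_neg, expLin_add, mul_comm]
  have h := hT x (expLin ζ) (smoothFn_expLin ζ) x
  rw [sub_self, opApply_expLin, htrans, opApply_const_mul_expLin, ← expLin_add,
    neg_add_cancel, expLin_zero] at h
  simpa using h.symm

lemma coeff_eq_coeff_zero (hT : TransInv m a) {β : Fin (n + 1) → ℕ} (hβ : β ∈ mIdx (n + 1) m)
    (x : Fin (n + 1) → ℝ) : a β x = a β 0 := by
  refine sub_eq_zero.mp (eq_zero_of_forall_sum_mul_prod_pow_eq_zero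
    (c := fun β => a β x - a β 0) (fun ζ => ?_) β hβ)
  simp only [sub_mul, Finset.sum_sub_distrib]
  exact sub_eq_zero.mpr (symbol_eq_symbol_zero hT ζ x)

lemma symbol_vecMul (hL : LorentzInv m a) {Λ : Matrix (Fin (n + 1)) (Fin (n + 1)) ℝ}
    (hΛ : IsLorentz Λ) (ζ : Fin (n + 1) → ℂ) :
    symbol m a (ζ ᵥ* Λ.map (↑)) 0 = symbol m a ζ 0 := by
  have h := hL Λ hΛ (expLin ζ) (smoothFn_expLin ζ) 0
  simp only [expLin_mulVec, mulVec_zero, opApply_expLin, expLin_zero, mul_one] at h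
  exact h.symm

lemma symbol_smul_eq_zero (hT : TransInv m a) (hD : DilInv m a) {ζ : Fin (n + 1) → ℂ}
    (hζ : symbol m a ζ 0 = 0) {r : ℝ} (hr : 0 < r) : symbol m a ((r : ℂ) • ζ) 0 = 0 := by
  have hzero (ξ : Fin (n + 1) → ℂ) : opApply m a (expLin ξ) = 0 ↔ symbol m a ξ 0 = 0 := by
    simp only [funext_iff, opApply_expLin, Pi.zero_apply, symbol_eq_symbol_zero hT ξ,
      mul_eq_zero, Complex.exp_ne_zero, expLin, or_false]
    exact ⟨fun h => h 0, fun h _ => h⟩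
  have hne : expLin ζ ≠ 0 := fun h =>
    one_ne_zero ((expLin_zero ζ).symm.trans (congrFun h 0))
  have h := (hD (expLin ζ) (smoothFn_expLin ζ) hne).1.mp ((hzero ζ).mpr hζ) r hr
  simp only [expLin_smul] at h
  exact (hzero _).mp h

end Invariance

section Lorentz

variable {n : ℕ}

lemma isLorentz_diagonal {ε : Fin (n + 1) → ℝ} (hε : ∀ i, ε i * ε i = 1) :
    IsLorentz (diagonal ε) := by
  unfold IsLorentz minkMatrix
  rw [diagonal_transpose, diagonal_mul_diagonal, diagonal_mul_diagonal]
  congr 1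
  funext i
  rw [mul_right_comm, hε, one_mul]

def minkReflection (v : Fin (n + 1) → ℝ) : Matrix (Fin (n + 1)) (Fin (n + 1)) ℝ :=
  1 - (2 / (v ⬝ᵥ minkMatrix n *ᵥ v)) • vecMulVec v (minkMatrix n *ᵥ v)

lemma isLorentz_minkReflection {v : Fin (n + 1) → ℝ} (hv : v ⬝ᵥ minkMatrix n *ᵥ v ≠ 0) :
    IsLorentz (minkReflection v) := by
  have hvg : v ᵥ* minkMatrix n = minkMatrix n *ᵥ v := by
    rw [← mulVec_transpose, minkMatrix, diagonal_transpose]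
  unfold IsLorentz minkReflection
  set g := minkMatrix n
  set w := g *ᵥ v
  have h1 : vecMulVec w v * g = vecMulVec w w := by rw [vecMulVec_mul, hvg]
  have h2 : g * vecMulVec v w = vecMulVec w w := mul_vecMulVec _ _ _
  have h3 : vecMulVec w w * vecMulVec v w = (v ⬝ᵥ w) • vecMulVec w w := by
    rw [vecMulVec_mul_vecMulVec, dotProduct_comm, vecMulVec_smul]
  rw [transpose_sub, transpose_one, transpose_smul, transpose_vecMulVec]
  simp only [sub_mul, mul_sub, one_mul, mul_one, smul_mul, Matrix.mul_smul, h1, h2, h3, smul_smul]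
  rw [div_mul_cancel₀ 2 hv]
  module

lemma minkMatrix_mulVec_single_add_single {s : Fin (n + 1)} (hs : s ≠ 0) (x y : ℝ) :
    minkMatrix n *ᵥ (Pi.single 0 x + Pi.single s y) = Pi.single 0 x - Pi.single s y := by
  ext k
  simp only [minkMatrix, mulVec_add, diagonal_mulVec_single, Pi.sub_apply, Pi.add_apply,
    Pi.single_apply]
  split_ifs <;> simp_all

lemma minkReflection_row_zero {s : Fin (n + 1)} (hs : s ≠ 0) :
    minkReflection (Pi.single 0 1 + Pi.single s 2) 0
      = Pi.single 0 (5 / 3) + Pi.single s (-4 / 3) := by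
  ext k
  rw [minkReflection, minkMatrix_mulVec_single_add_single hs]
  rcases eq_or_ne k 0 with rfl | hk0
  · simp [hs.symm, vecMulVec_apply]
    norm_num
  · rcases eq_or_ne k s with rfl | hks
    · simp [hs, hs.symm, one_apply, vecMulVec_apply]
      norm_num
    · simp [hk0, hks, one_apply, Ne.symm hk0, vecMulVec_apply]

end Lorentz

section Squares

variable {ι R : Type*} [Fintype ι] [DecidableEq ι] [CommSemiring R]

lemma sum_mul_sq_single (c : ι → R) (s : ι) (x : R) :
    ∑ i, c i * (Pi.single s x : ι → R) i ^ 2 = c s * x ^ 2 := by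
  rw [Fintype.sum_eq_single s fun k hk => by simp [hk]]
  simp

lemma sum_mul_sq_single_add_single (c : ι → R) {s t : ι} (hst : s ≠ t) (x y : R) :
    ∑ i, c i * (Pi.single s x + Pi.single t y : ι → R) i ^ 2 = c s * x ^ 2 + c t * y ^ 2 := by
  rw [Fintype.sum_eq_add s t hst fun k hk => by simp [hk.1, hk.2]]
  simp [hst, hst.symm]

end Squares

section SecondOrder

variable {n m : ℕ} {a : (Fin (n + 1) → ℕ) → (Fin (n + 1) → ℝ) → ℂ}

lemma coeff_eq_zero_of_odd (hL : LorentzInv m a) {β : Fin (n + 1) → ℕ}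
    (hβ : β ∈ mIdx (n + 1) m) {i : Fin (n + 1)} (hi : Odd (β i)) : a β 0 = 0 := by
  let ε : Fin (n + 1) → ℝ := fun k => if k = i then -1 else 1
  have hε : ∀ k, ε k * ε k = 1 := fun k => by by_cases hk : k = i <;> simp [ε, hk]
  have hsign : ∏ k, (ε k : ℂ) ^ β k = -1 := by
    rw [Fintype.prod_eq_single i fun k hk => by simp [ε, hk]]
    simp [ε, hi.neg_one_pow]
  have key (ζ : Fin (n + 1) → ℂ) :
      ∑ γ ∈ mIdx (n + 1) m, (a γ 0 * ((∏ k, (ε k : ℂ) ^ γ k) - 1)) * ∏ k, ζ k ^ γ k = 0 := by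
    have h := symbol_vecMul hL (isLorentz_diagonal hε) ζ
    simp only [symbol, diagonal_map Complex.ofReal_zero, vecMul_diagonal, mul_pow,
      Finset.prod_mul_distrib] at h
    rw [← sub_eq_zero.mpr h, ← Finset.sum_sub_distrib]
    exact Finset.sum_congr rfl fun γ _ => by ring
  have h := eq_zero_of_forall_sum_mul_prod_pow_eq_zero key β hβ
  rw [hsign] at h
  linear_combination (-1 / 2 : ℂ) * h

lemma symbol_two_eq (hL : LorentzInv 2 a) (ζ : Fin (n + 1) → ℂ) :
    symbol 2 a ζ 0 = a 0 0 + ∑ i, a (Pi.single i 2) 0 * ζ i ^ 2 := by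
  rw [symbol, sum_mIdx_two_of_odd _ fun β hβ i hi => by
    rw [coeff_eq_zero_of_odd hL hβ hi, zero_mul]]
  simp [Pi.single_apply, pow_ite]

lemma coeff_single_succ (hL : LorentzInv 2 a) (j : Fin n) :
    a (Pi.single j.succ 2) 0 = -a (Pi.single 0 2) 0 := by
  have hs : j.succ ≠ 0 := Fin.succ_ne_zero j
  have hv : (Pi.single 0 1 + Pi.single j.succ 2) ⬝ᵥ
      minkMatrix n *ᵥ (Pi.single 0 1 + Pi.single j.succ 2) ≠ 0 := by
    rw [minkMatrix_mulVec_single_add_single hs]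
    simp [hs, hs.symm]
    norm_num
  have h := symbol_vecMul hL (isLorentz_minkReflection hv) (Pi.single 0 1)
  have hrow : ((minkReflection (Pi.single 0 1 + Pi.single j.succ 2)).map (↑)).row 0
      = (Pi.single 0 (5 / 3) + Pi.single j.succ (-4 / 3) : Fin (n + 1) → ℂ) := by
    ext k
    simp [minkReflection_row_zero hs, Pi.single_apply, apply_ite Complex.ofReal]
  rw [single_one_vecMul, hrow, symbol_two_eq hL, symbol_two_eq hL,
    sum_mul_sq_single_add_single _ hs.symm, sum_mul_sq_single] at h
  linear_combination (9 / 16 : ℂ) * h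

lemma coeff_single_zero_ne_zero (hT : TransInv 2 a) (hL : LorentzInv 2 a)
    (htop : ∃ β ∈ mIdx (n + 1) 2, (∑ i, β i) = 2 ∧ ∃ x, a β x ≠ 0) :
    a (Pi.single 0 2) 0 ≠ 0 := by
  obtain ⟨β, hβ, hβ2, x, hax⟩ := htop
  rw [coeff_eq_coeff_zero hT hβ] at hax
  by_cases hev : ∀ i, Even (β i)
  · rcases eq_zero_or_eq_single_two_of_even hβ2.le hev with rfl | ⟨i, rfl⟩
    · simp at hβ2
    · cases i using Fin.cases with
      | zero => exact hax
      | succ j => rwa [coeff_single_succ hL j, neg_ne_zero] at hax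
  · push Not at hev
    obtain ⟨i, hi⟩ := hev
    exact absurd (coeff_eq_zero_of_odd hL hβ (Nat.not_even_iff_odd.mp hi)) hax

lemma coeff_zero_eq_zero (hT : TransInv 2 a) (hL : LorentzInv 2 a) (hD : DilInv 2 a)
    (hα : a (Pi.single 0 2) 0 ≠ 0) : a 0 0 = 0 := by
  obtain ⟨w, hw⟩ := IsAlgClosed.exists_pow_nat_eq (-a 0 0 / a (Pi.single 0 2) 0) two_pos
  have hαw : a (Pi.single 0 2) 0 * w ^ 2 = -a 0 0 := by rw [hw, mul_div_cancel₀ _ hα]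
  have hζ : symbol 2 a (Pi.single 0 w) 0 = 0 := by
    rw [symbol_two_eq hL, sum_mul_sq_single, hαw, add_neg_cancel]
  have h2ζ := symbol_smul_eq_zero hT hD hζ two_pos
  rw [← Pi.single_smul, symbol_two_eq hL, sum_mul_sq_single, smul_eq_mul] at h2ζ
  push_cast at h2ζ
  linear_combination (-1 / 3 : ℂ) * (h2ζ - 4 * hαw)

lemma opApply_two_eq (hT : TransInv 2 a) (hL : LorentzInv 2 a) (u : (Fin (n + 1) → ℝ) → ℂ)
    (x : Fin (n + 1) → ℝ) :
    opApply 2 a u x = a 0 0 * u x + ∑ i, a (Pi.single i 2) 0 * pd i (pd i u) x := by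
  rw [opApply, Finset.sum_congr rfl fun β hβ => by rw [coeff_eq_coeff_zero hT hβ x],
    sum_mIdx_two_of_odd _ fun β hβ i hi => by rw [coeff_eq_zero_of_odd hL hβ hi, zero_mul]]
  simp [pdMulti_zero, pdMulti_single]

end SecondOrder

theorem second_order_poincare_dilation_invariant_general (n : ℕ)
    (a : (Fin (n + 1) → ℕ) → (Fin (n + 1) → ℝ) → ℂ)
    (htop : ∃ β ∈ mIdx (n + 1) 2, (∑ i, β i) = 2 ∧ ∃ x, a β x ≠ 0)
    (hT : TransInv 2 a) (hL : LorentzInv 2 a) (hD : DilInv 2 a) :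
    ∃ α : ℂ, α ≠ 0 ∧
      ∀ u : (Fin (n + 1) → ℝ) → ℂ, SmoothFn u → ∀ x,
        opApply 2 a u x = α * dAlem u x := by
  have hα := coeff_single_zero_ne_zero hT hL htop
  refine ⟨a (Pi.single 0 2) 0, hα, fun u _ x => ?_⟩
  rw [opApply_two_eq hT hL, coeff_zero_eq_zero hT hL hD hα, Fin.sum_univ_succ]
  simp only [coeff_single_succ hL, dAlem, neg_mul, Finset.sum_neg_distrib, ← Finset.mul_sum]
  ring

/-- Corollary 2: Any Poincaré and dilation invariant linear partial
differential operator of the second order on space-time `ℝ × ℝⁿ` is of the form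
`L = α □` with `α ≠ 0`. -/
theorem second_order_poincare_dilation_invariant (n : ℕ)
    (a : (Fin (n + 1) → ℕ) → (Fin (n + 1) → ℝ) → ℂ)
    (hcont : ∀ β ∈ mIdx (n + 1) 2, Continuous (a β))
    (htop : ∃ β ∈ mIdx (n + 1) 2, (∑ i, β i) = 2 ∧ ∃ x, a β x ≠ 0)
    (hT : TransInv 2 a) (hL : LorentzInv 2 a) (hD : DilInv 2 a) :
    ∃ α : ℂ, α ≠ 0 ∧
      ∀ u : (Fin (n + 1) → ℝ) → ℂ, SmoothFn u → ∀ x,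
        opApply 2 a u x = α * dAlem u x :=
  second_order_poincare_dilation_invariant_general n a htop hT hL hD
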